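/- arXiv:1406.1054 — 2 statements merged into one kernel-verified Lean document; each statement's English description precedes it below -/
import Mathlib

section
/- Let F be a one-dimensional commutative formal group law over a commutative ring R, and let a₁₁, a₁₂, a₁₃, a₂₂ ∈ R be the coefficients of xy, x²y, x³y, x²y² in F respectively. Then 2(a₂₂ - a₁₁a₁₂) = 3a₁₃ in R. (This is the only relation among formal group law coefficients in degree 4; it holds in the Lazard ring.) -/
/-!
Formal group law preliminaries: substitution of (multivariate) formal power series,
the definition of a one-dimensional commutative formal group law, its formal inverse,
and the formal difference `x -_F y := F(x, ι(y))`.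
-/

noncomputable section

open MvPowerSeries

/-- Substitution `f(a 0, a 1, …)` of multivariate power series (the intended use is when
each `a i` has zero constant coefficient): the coefficient at `e` only receives
contributions from monomials of `f` with exponent `d` such that each `d i` is at most the
total degree of `e`. -/
def MvPowerSeries.substSeries {σ τ R : Type*} [Fintype σ] [DecidableEq σ] [CommRing R]
    (a : σ → MvPowerSeries τ R) (f : MvPowerSeries σ R) : MvPowerSeries τ R :=
  fun e => ∑ d ∈ Finset.Iic (Finsupp.equivFunOnFinite.symm fun _ : σ => e.sum fun _ n => n),
    MvPowerSeries.coeff d f * MvPowerSeries.coeff e (∏ i, (a i) ^ d i)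

/-- A one-dimensional commutative formal group law over a commutative ring `R`:
a power series `F ∈ R[[x,y]]` with `F(x,0) = x`, `F(0,y) = y`, `F(x,y) = F(y,x)` and
`F(F(x,y),z) = F(x,F(y,z))` (an identity of power series in `R[[x,y,z]]`). -/
structure IsFormalGroupLaw (R : Type*) [CommRing R] (F : MvPowerSeries (Fin 2) R) : Prop where
  subst_zero_right :
    MvPowerSeries.substSeries (![X 0, 0] : Fin 2 → MvPowerSeries (Fin 2) R) F = X 0
  subst_zero_left :
    MvPowerSeries.substSeries (![0, X 1] : Fin 2 → MvPowerSeries (Fin 2) R) F = X 1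
  comm :
    MvPowerSeries.substSeries (![X 1, X 0] : Fin 2 → MvPowerSeries (Fin 2) R) F = F
  assoc :
    MvPowerSeries.substSeries
      (![MvPowerSeries.substSeries (![X 0, X 1] : Fin 2 → MvPowerSeries (Fin 3) R) F, X 2] :
        Fin 2 → MvPowerSeries (Fin 3) R) F
    = MvPowerSeries.substSeries
      (![X 0, MvPowerSeries.substSeries (![X 1, X 2] : Fin 2 → MvPowerSeries (Fin 3) R) F] :
        Fin 2 → MvPowerSeries (Fin 3) R) F

/-- `ι` is the formal inverse of the formal group law `F`: a univariate power series with
zero constant term such that `F(x, ι(x)) = 0`. -/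
def IsFormalInverse {R : Type*} [CommRing R] (F : MvPowerSeries (Fin 2) R)
    (ι : PowerSeries R) : Prop :=
  PowerSeries.constantCoeff ι = 0 ∧
    MvPowerSeries.substSeries (![PowerSeries.X, ι] : Fin 2 → PowerSeries R) F = 0

/-- The formal difference `x -_F y := F(x, ι(y))`. -/
def fDiff {R : Type*} [CommRing R] (F : MvPowerSeries (Fin 2) R) (ι : PowerSeries R) :
    MvPowerSeries (Fin 2) R :=
  MvPowerSeries.substSeries
    (![X 0, MvPowerSeries.substSeries (fun _ : Unit => (X 1 : MvPowerSeries (Fin 2) R)) ι] :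
      Fin 2 → MvPowerSeries (Fin 2) R) F

/-- The formal difference `y -_F x := F(y, ι(x))`. -/
def fDiffSwap {R : Type*} [CommRing R] (F : MvPowerSeries (Fin 2) R) (ι : PowerSeries R) :
    MvPowerSeries (Fin 2) R :=
  MvPowerSeries.substSeries
    (![X 1, MvPowerSeries.substSeries (fun _ : Unit => (X 0 : MvPowerSeries (Fin 2) R)) ι] :
      Fin 2 → MvPowerSeries (Fin 2) R) F

/-!
Mathlib's `FormalGroup` asks only for `F = x + y + (higher terms)` and associativity, and it
already knows `F(x, 0) = x`; since the truncated sum `substSeries` agrees with Mathlib's `subst`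
on series without constant term, a formal group law in the sense above is a `FormalGroup`.

Write `cᵢⱼ` for the coefficient of `xⁱyʲ` in `F` and compare the coefficients of `x²yz` in
`F(F(x,y),z) = F(x,F(y,z))`. On the left `z` only enters through `zʲ`, so the coefficient is
`∑ᵢ cᵢ₁ [x²y] F(x,y)ⁱ = c₁₁c₂₁ + c₂₁ · 2c₁₁ + c₃₁ · 3`, using `c₂₀ = 0`. On the right `x` only
enters through `xⁱ`, giving `∑ⱼ c₂ⱼ [yz] F(y,z)ʲ = c₂₁c₁₁ + c₂₂ · 2`. Equating the two yields
`2(c₂₂ - c₁₁c₂₁) = 3c₃₁`.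
-/

open Finsupp

theorem Finsupp.sum_Iic_fin_two {M : Type*} [AddCommMonoid M] (e : Fin 2 →₀ ℕ)
    (f : (Fin 2 →₀ ℕ) → M) :
    ∑ d ∈ Finset.Iic e, f d =
      ∑ i ∈ Finset.range (e 0 + 1), ∑ j ∈ Finset.range (e 1 + 1), f (single 0 i + single 1 j) := by
  rw [← Finset.sum_product']
  refine Finset.sum_nbij' (fun d => (d 0, d 1)) (fun p => single 0 p.1 + single 1 p.2)
    ?_ ?_ ?_ ?_ ?_
  · intro d hd
    simp only [Finset.mem_Iic, le_def] at hd
    simp [hd 0, hd 1]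
  · intro p hp
    simp only [Finset.mem_product, Finset.mem_range, Nat.lt_succ_iff] at hp
    simp [le_def, Fin.forall_fin_two, hp.1, hp.2]
  · intro d _
    ext i; fin_cases i <;> simp
  · intro p _
    simp
  · intro d _
    congr 1; ext i; fin_cases i <;> simp

namespace MvPowerSeries

variable {σ τ R : Type*} [CommRing R]

theorem coeff_mul_eq_sum_Iic [DecidableEq σ] (f g : MvPowerSeries σ R) (e : σ →₀ ℕ) :
    coeff e (f * g) = ∑ d ∈ Finset.Iic e, coeff d f * coeff (e - d) g := by
  rw [coeff_mul]
  refine Finset.sum_nbij' Prod.fst (fun d => (d, e - d)) ?_ ?_ ?_ ?_ ?_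
  · intro p hp
    rw [Finset.HasAntidiagonal.mem_antidiagonal] at hp
    simp [← hp]
  · intro d hd
    simp only [Finset.mem_Iic] at hd
    simp [add_tsub_cancel_of_le hd]
  · intro p hp
    rw [Finset.HasAntidiagonal.mem_antidiagonal] at hp
    simp [← hp]
  · intro d _
    rfl
  · intro p hp
    rw [Finset.HasAntidiagonal.mem_antidiagonal] at hp
    simp [← hp]

theorem coeff_mul_fin_two (f g : MvPowerSeries (Fin 2) R) (a b : ℕ) :
    coeff (single 0 a + single 1 b) (f * g) =
      ∑ i ∈ Finset.range (a + 1), ∑ j ∈ Finset.range (b + 1),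
        coeff (single 0 i + single 1 j) f * coeff (single 0 (a - i) + single 1 (b - j)) g := by
  have hsub (i j : ℕ) : single 0 a + single 1 b - (single 0 i + single 1 j) =
      (single 0 (a - i) + single 1 (b - j) : Fin 2 →₀ ℕ) := by
    ext k; fin_cases k <;> simp
  rw [coeff_mul_eq_sum_Iic, Finsupp.sum_Iic_fin_two]
  simp [hsub]

theorem coeff_pow_eq_zero_of_degree_lt {f : MvPowerSeries σ R} (hf : constantCoeff f = 0)
    {n : ℕ} {e : σ →₀ ℕ} (h : e.degree < n) : coeff e (f ^ n) = 0 :=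
  coeff_of_lt_order <| (Nat.cast_lt.mpr h).trans_le (le_order_pow_of_constantCoeff_eq_zero n hf)

theorem coeff_prod_pow_eq_zero_of_degree_lt [Fintype σ] {a : σ → MvPowerSeries τ R}
    (ha : ∀ i, constantCoeff (a i) = 0) {d : σ →₀ ℕ} {e : τ →₀ ℕ} {s : σ}
    (h : e.degree < d s) : coeff e (∏ i, a i ^ d i) = 0 := by
  apply coeff_of_lt_order
  calc (e.degree : ℕ∞) < d s := by exact_mod_cast h
    _ ≤ ∑ i, (d i : ℕ∞) := by
      exact_mod_cast Finset.single_le_sum (fun i _ => (d i).zero_le) (Finset.mem_univ s)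
    _ ≤ ∑ i, (a i ^ d i).order :=
      Finset.sum_le_sum fun i _ => le_order_pow_of_constantCoeff_eq_zero _ (ha i)
    _ ≤ _ := le_order_prod _ _

theorem substSeries_eq_subst [Fintype σ] [DecidableEq σ] {a : σ → MvPowerSeries τ R}
    (ha : ∀ i, constantCoeff (a i) = 0) (f : MvPowerSeries σ R) :
    substSeries a f = subst a f := by
  ext e
  rw [coeff_subst (hasSubst_of_constantCoeff_zero ha), finsum_eq_sum_of_support_subset]
  · refine Finset.sum_congr rfl fun d _ => ?_
    rw [smul_eq_mul, prod_fintype _ _ fun _ => pow_zero _]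
  · intro d hd
    rw [Function.mem_support, smul_eq_mul, prod_fintype _ _ fun _ => pow_zero _] at hd
    simp only [Finset.coe_Iic, Set.mem_Iic, le_def, equivFunOnFinite_symm_apply_apply]
    intro s
    by_contra! h
    exact hd (by rw [coeff_prod_pow_eq_zero_of_degree_lt ha h, mul_zero])

theorem coeff_substSeries_fin_two (a : Fin 2 → MvPowerSeries τ R)
    (f : MvPowerSeries (Fin 2) R) (e : τ →₀ ℕ) :
    coeff e (substSeries a f) =
      ∑ i ∈ Finset.range (e.degree + 1), ∑ j ∈ Finset.range (e.degree + 1),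
        coeff (single 0 i + single 1 j) f * coeff e (a 0 ^ i * a 1 ^ j) := by
  rw [coeff_apply, substSeries, Finsupp.sum_Iic_fin_two]
  simp [Fin.prod_univ_two, degree_apply, Finsupp.sum]

theorem coeff_substSeries_X_zero [DecidableEq τ] (s : τ) (f : MvPowerSeries (Fin 2) R)
    (k : ℕ) :
    coeff (single s k) (substSeries (![X s, 0] : Fin 2 → MvPowerSeries τ R) f) =
      coeff (single 0 k) f := by
  rw [coeff_substSeries_fin_two]
  simp [zero_pow_eq, apply_ite (coeff _), coeff_X_pow, (single_injective s).eq_iff,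
    Finset.sum_ite_eq]

theorem coeff_substSeries_zero_X [DecidableEq τ] (s : τ) (f : MvPowerSeries (Fin 2) R)
    (k : ℕ) :
    coeff (single s k) (substSeries (![0, X s] : Fin 2 → MvPowerSeries τ R) f) =
      coeff (single 1 k) f := by
  rw [coeff_substSeries_fin_two]
  simp [zero_pow_eq, apply_ite (coeff _), coeff_X_pow, (single_injective s).eq_iff,
    Finset.sum_ite_eq]

theorem subst_X_X_eq_rename (g : Fin 2 → τ) (f : MvPowerSeries (Fin 2) R) :
    subst (![X (g 0), X (g 1)] : Fin 2 → MvPowerSeries τ R) f = rename g f := by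
  rw [rename_eq_subst]
  congr
  ext i
  fin_cases i <;> rfl

theorem coeff_embDomain_add_single_rename_mul_X_pow [DecidableEq τ] (g : σ ↪ τ) {s : τ}
    (hs : s ∉ Set.range g) (p : MvPowerSeries σ R) (d : σ →₀ ℕ) (n j : ℕ) :
    coeff (embDomain g d + single s n) (rename g p * X s ^ j) =
      if j = n then coeff d p else 0 := by
  have hds : embDomain g d s = 0 := embDomain_of_notMem_range _ _ _ hs
  rw [X_pow_eq, coeff_mul_monomial, mul_one]
  rcases lt_trichotomy j n with h | rfl | h
  · rw [if_pos ((single_mono h.le).trans le_add_self), if_neg h.ne]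
    apply coeff_rename_eq_zero
    rintro ⟨x, hx⟩
    have := DFunLike.congr_fun hx s
    simp [mapDomain_of_notMem_range _ _ hs, hds] at this
    omega
  · rw [if_pos le_add_self, if_pos rfl, add_tsub_cancel_right, coeff_embDomain_rename]
  · rw [if_neg, if_neg h.ne']
    intro hle
    have := hle s
    simp [hds] at this
    omega

end MvPowerSeries

namespace FormalGroup

variable {R : Type*} [CommRing R] (F : FormalGroup R)

theorem coeff_single_zero (k : ℕ) :
    coeff (single 0 k) F.toPowerSeries = if k = 1 then 1 else 0 := by
  have h := congrArg (PowerSeries.coeff k) F.Xzero_eq_X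
  rw [Xzero, ← substSeries_eq_subst (by simp [Fin.forall_fin_two, PowerSeries.X]),
    PowerSeries.coeff_X] at h
  rw [← h]
  exact (coeff_substSeries_X_zero () _ k).symm

theorem coeff_pow_two_two_zero :
    coeff (single 0 2 + single 1 0) (F.toPowerSeries ^ 2) = 1 := by
  rw [pow_two, coeff_mul_fin_two]
  simp only [Finset.sum_range_succ, Finset.sum_range_zero]
  norm_num [F.zero_constantCoeff, F.lin_coeff_X, coeff_single_zero]

theorem coeff_pow_two_one_one :
    coeff (single 0 1 + single 1 1) (F.toPowerSeries ^ 2) = 2 := by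
  rw [pow_two, coeff_mul_fin_two]
  simp only [Finset.sum_range_succ, Finset.sum_range_zero]
  norm_num [F.zero_constantCoeff, F.lin_coeff_X, F.lin_coeff_Y]

theorem coeff_pow_two_two_one :
    coeff (single 0 2 + single 1 1) (F.toPowerSeries ^ 2) =
      2 * coeff (single 0 1 + single 1 1) F.toPowerSeries := by
  rw [pow_two, coeff_mul_fin_two]
  simp only [Finset.sum_range_succ, Finset.sum_range_zero]
  norm_num [F.zero_constantCoeff, F.lin_coeff_X, F.lin_coeff_Y, coeff_single_zero]
  ring

theorem coeff_pow_three_two_one :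
    coeff (single 0 2 + single 1 1) (F.toPowerSeries ^ 3) = 3 := by
  have hlow {e : Fin 2 →₀ ℕ} (h : e.degree < 2) : coeff e (F.toPowerSeries ^ 2) = 0 :=
    coeff_pow_eq_zero_of_degree_lt F.zero_constantCoeff h
  rw [pow_succ, coeff_mul_fin_two]
  simp only [Finset.sum_range_succ, Finset.sum_range_zero, coeff_pow_two_two_zero,
    coeff_pow_two_one_one]
  norm_num [hlow, F.zero_constantCoeff, F.lin_coeff_X, F.lin_coeff_Y]

theorem coeff_two_one_one_assoc_left :
    coeff (single 0 2 + single 1 1 + single 2 1 : Fin 3 →₀ ℕ)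
      (subst ![subst ![X 0, X 1] F.toPowerSeries, X 2] F.toPowerSeries) =
      3 * (coeff (single 0 1 + single 1 1) F.toPowerSeries *
        coeff (single 0 2 + single 1 1) F.toPowerSeries) +
      3 * coeff (single 0 3 + single 1 1) F.toPowerSeries := by
  have hxy : subst (![X 0, X 1] : Fin 2 → MvPowerSeries (Fin 3) R) F.toPowerSeries =
      rename Fin.castSuccEmb F.toPowerSeries :=
    subst_X_X_eq_rename Fin.castSucc _
  have hz : (2 : Fin 3) ∉ Set.range Fin.castSuccEmb := by
    rintro ⟨i, hi⟩; fin_cases i <;> simp at hi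
  have hdeg : (single 0 2 + single 1 1 + single 2 1 : Fin 3 →₀ ℕ).degree = 4 := by simp
  have hexp : (single 0 2 + single 1 1 + single 2 1 : Fin 3 →₀ ℕ) =
      embDomain Fin.castSuccEmb (single 0 2 + single 1 1) + single 2 1 := by
    simp [embDomain_add, embDomain_single]
  have hF4 : coeff (single 0 2 + single 1 1) (F.toPowerSeries ^ 4) = 0 :=
    coeff_pow_eq_zero_of_degree_lt F.zero_constantCoeff (by simp)
  rw [hxy, ← substSeries_eq_subst, coeff_substSeries_fin_two, hdeg, hexp]
  · simp only [Matrix.cons_val_zero, Matrix.cons_val_one, ← map_pow,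
      coeff_embDomain_add_single_rename_mul_X_pow _ hz, mul_ite, mul_zero, Finset.sum_ite_eq']
    simp only [Finset.sum_range_succ, Finset.sum_range_zero]
    norm_num [coeff_one, coeff_pow_two_two_one, coeff_pow_three_two_one, hF4]
    ring
  · intro i; fin_cases i <;> simp [F.zero_constantCoeff]

theorem coeff_two_one_one_assoc_right :
    coeff (single 0 2 + single 1 1 + single 2 1 : Fin 3 →₀ ℕ)
      (subst ![X 0, subst ![X 1, X 2] F.toPowerSeries] F.toPowerSeries) =
      coeff (single 0 1 + single 1 1) F.toPowerSeries *
        coeff (single 0 2 + single 1 1) F.toPowerSeries +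
      2 * coeff (single 0 2 + single 1 2) F.toPowerSeries := by
  have hyz : subst (![X 1, X 2] : Fin 2 → MvPowerSeries (Fin 3) R) F.toPowerSeries =
      rename (Fin.succEmb 2) F.toPowerSeries :=
    subst_X_X_eq_rename Fin.succ _
  have hx : (0 : Fin 3) ∉ Set.range (Fin.succEmb 2) := by
    rintro ⟨i, hi⟩; fin_cases i <;> simp at hi
  have hdeg : (single 0 2 + single 1 1 + single 2 1 : Fin 3 →₀ ℕ).degree = 4 := by simp
  have hexp : (single 0 2 + single 1 1 + single 2 1 : Fin 3 →₀ ℕ) =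
      embDomain (Fin.succEmb 2) (single 0 1 + single 1 1) + single 0 2 := by
    ext i; fin_cases i <;> simp [embDomain_add, embDomain_single]
  have hF3 : coeff (single 0 1 + single 1 1) (F.toPowerSeries ^ 3) = 0 :=
    coeff_pow_eq_zero_of_degree_lt F.zero_constantCoeff (by simp)
  have hF4 : coeff (single 0 1 + single 1 1) (F.toPowerSeries ^ 4) = 0 :=
    coeff_pow_eq_zero_of_degree_lt F.zero_constantCoeff (by simp)
  rw [hyz, ← substSeries_eq_subst, coeff_substSeries_fin_two, hdeg, hexp]
  · simp only [Matrix.cons_val_zero, Matrix.cons_val_one, ← map_pow,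
      mul_comm ((X 0 : MvPowerSeries (Fin 3) R) ^ _),
      coeff_embDomain_add_single_rename_mul_X_pow _ hx, mul_ite, mul_zero]
    simp only [Finset.sum_range_succ, Finset.sum_range_zero]
    norm_num [coeff_one, coeff_pow_two_one_one, hF3, hF4]
    ring
  · intro i; fin_cases i <;> simp [F.zero_constantCoeff]

theorem degree_four_relation :
    2 * (coeff (single 0 2 + single 1 2) F.toPowerSeries -
      coeff (single 0 1 + single 1 1) F.toPowerSeries *
        coeff (single 0 2 + single 1 1) F.toPowerSeries) =
      3 * coeff (single 0 3 + single 1 1) F.toPowerSeries := by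
  have h := congrArg (coeff (single 0 2 + single 1 1 + single 2 1 : Fin 3 →₀ ℕ)) F.assoc
  rw [coeff_two_one_one_assoc_left, coeff_two_one_one_assoc_right] at h
  linear_combination -h

end FormalGroup

namespace IsFormalGroupLaw

variable {R : Type*} [CommRing R] {F : MvPowerSeries (Fin 2) R}

theorem coeff_single_zero (hF : IsFormalGroupLaw R F) (k : ℕ) :
    coeff (single 0 k) F = if k = 1 then 1 else 0 := by
  rw [← coeff_substSeries_X_zero (0 : Fin 2) F k, hF.subst_zero_right, coeff_X]
  simp [(single_injective _).eq_iff]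

theorem coeff_single_one (hF : IsFormalGroupLaw R F) (k : ℕ) :
    coeff (single 1 k) F = if k = 1 then 1 else 0 := by
  rw [← coeff_substSeries_zero_X (1 : Fin 2) F k, hF.subst_zero_left, coeff_X]
  simp [(single_injective _).eq_iff]

theorem constantCoeff_eq_zero (hF : IsFormalGroupLaw R F) : constantCoeff F = 0 := by
  simpa using hF.coeff_single_zero 0

def toFormalGroup (hF : IsFormalGroupLaw R F) : FormalGroup R where
  toPowerSeries := F
  zero_constantCoeff := hF.constantCoeff_eq_zero
  lin_coeff_X := by simpa using hF.coeff_single_zero 1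
  lin_coeff_Y := by simpa using hF.coeff_single_one 1
  assoc := by
    have hXX (s t : Fin 3) :
        substSeries (![X s, X t] : Fin 2 → MvPowerSeries (Fin 3) R) F = subst ![X s, X t] F :=
      substSeries_eq_subst (by simp [Fin.forall_fin_two]) F
    have hXX₀ (s t : Fin 3) :
        constantCoeff (subst (![X s, X t] : Fin 2 → MvPowerSeries (Fin 3) R) F) = 0 :=
      constantCoeff_subst_eq_zero HasSubst.X_X (by simp [Fin.forall_fin_two])
        hF.constantCoeff_eq_zero
    have h := hF.assoc
    rwa [hXX, hXX, substSeries_eq_subst (by simp [Fin.forall_fin_two, hXX₀]),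
      substSeries_eq_subst (by simp [Fin.forall_fin_two, hXX₀])] at h

end IsFormalGroupLaw

/-- Let `F` be a one-dimensional commutative formal group law over a
commutative ring `R`, and let `a₁₁, a₁₂, a₁₃, a₂₂` be the coefficients of
`xy, x²y, x³y, x²y²` in `F`. Then `2(a₂₂ - a₁₁a₁₂) = 3a₁₃` in `R` (the degree-4 relation
of the Lazard ring). -/
theorem fgl_lazard_degree_four_relation {R : Type*} [CommRing R]
    (F : MvPowerSeries (Fin 2) R) (hF : IsFormalGroupLaw R F)
    (a₁₁ a₁₂ a₁₃ a₂₂ : R)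
    (ha₁₁ : a₁₁ = MvPowerSeries.coeff (Finsupp.single 0 1 + Finsupp.single 1 1) F)
    (ha₁₂ : a₁₂ = MvPowerSeries.coeff (Finsupp.single 0 2 + Finsupp.single 1 1) F)
    (ha₁₃ : a₁₃ = MvPowerSeries.coeff (Finsupp.single 0 3 + Finsupp.single 1 1) F)
    (ha₂₂ : a₂₂ = MvPowerSeries.coeff (Finsupp.single 0 2 + Finsupp.single 1 2) F) :
    2 * (a₂₂ - a₁₁ * a₁₂) = 3 * a₁₃ := by
  subst ha₁₁ ha₁₂ ha₁₃ ha₂₂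
  exact hF.toFormalGroup.degree_four_relation
end
end

section
/- Let F be a one-dimensional commutative formal group law over a commutative ring R with formal inverse ι. Then there exists a power series u ∈ R[[x,y]] with constant term 1 (hence a unit of R[[x,y]]) such that x -_F y = (x - y)·u. In particular x - y divides x -_F y and the quotient is an invertible power series. -/
/-!
Formal group law preliminaries: substitution of (multivariate) formal power series,
the definition of a one-dimensional commutative formal group law, its formal inverse,
and the formal difference `x -_F y := F(x, ι(y))`.
-/

noncomputable section

open MvPowerSeries

/-!
Write `G = x -_F y`. Identifying both variables with `t` sends `G` to `F(t, ι(t)) = 0`, and a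
power series vanishing on the diagonal is divisible by `x - y`. Setting `y = 0` sends `G` to
`F(x, 0) = x`, so the quotient `u` satisfies `x · u(x, 0) = x`, whence `u(0, 0) = 1`. Both
specialisations commute with `substSeries` because they act on coefficients by sums over
exponents of the same total degree, which is where `substSeries` truncates.
-/

open Finsupp Finset

theorem Finsupp.mapDomain_const_unit {σ : Type*} (e : σ →₀ ℕ) :
    mapDomain (fun _ => ()) e = single () e.degree := by
  ext
  rw [single_eq_same, ← degree_mapDomain (fun _ => ()), degree_eq_sum, Fintype.sum_unique]

namespace MvPowerSeries

variable {R : Type*} [CommRing R]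

section substSeries

variable {σ τ γ : Type*} [Fintype σ] [DecidableEq σ]

theorem coeff_substSeries (a : σ → MvPowerSeries τ R) (f : MvPowerSeries σ R) (e : τ →₀ ℕ) :
    coeff e (substSeries a f) =
      ∑ d ∈ Iic (equivFunOnFinite.symm fun _ : σ => e.degree),
        coeff d f * coeff e (∏ i, a i ^ d i) :=
  rfl

theorem substSeries_X (f : MvPowerSeries σ R) : substSeries X f = f := by
  ext e
  have hmonomial : ∀ d : σ →₀ ℕ, ∏ i, (X i : MvPowerSeries σ R) ^ d i = monomial d 1 := fun d => by
    rw [monomial_one_eq, Finsupp.prod_fintype _ _ fun _ => pow_zero _]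
  rw [coeff_substSeries]
  simp only [hmonomial, coeff_monomial, mul_ite, mul_one, mul_zero]
  rw [Finset.sum_ite_eq, if_pos (mem_Iic.mpr fun i => le_degree i e)]

theorem substSeries_zero (f : MvPowerSeries σ R) :
    substSeries (0 : σ → MvPowerSeries τ R) f = C (constantCoeff f) := by
  classical
  ext e
  have hprod : ∀ d : σ →₀ ℕ,
      ∏ i, (0 : σ → MvPowerSeries τ R) i ^ d i = if d = 0 then 1 else 0 := fun d => by
    split_ifs with hd
    · simp [hd]
    · obtain ⟨i, hi⟩ : ∃ i, d i ≠ 0 := by simpa [Finsupp.ext_iff] using hd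
      exact Finset.prod_eq_zero (Finset.mem_univ i) (by simp [hi])
  rw [coeff_substSeries, Finset.sum_eq_single_of_mem 0 (by simp)
    fun d _ hd => by rw [hprod, if_neg hd, map_zero, mul_zero], hprod, if_pos rfl, coeff_C,
    coeff_one, mul_ite, mul_one, mul_zero, coeff_zero_eq_constantCoeff_apply]

theorem map_substSeries_of_coeff_eq_sum (φ : MvPowerSeries τ R →+* MvPowerSeries γ R)
    (S : (γ →₀ ℕ) → Finset (τ →₀ ℕ)) (hφ : ∀ p x, coeff x (φ p) = ∑ e ∈ S x, coeff e p)
    (hS : ∀ x, ∀ e ∈ S x, e.degree = x.degree) (a : σ → MvPowerSeries τ R)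
    (f : MvPowerSeries σ R) : φ (substSeries a f) = substSeries (fun i => φ (a i)) f := by
  ext x
  calc coeff x (φ (substSeries a f))
      = ∑ e ∈ S x, ∑ d ∈ Iic (equivFunOnFinite.symm fun _ : σ => x.degree),
          coeff d f * coeff e (∏ i, a i ^ d i) := by
        rw [hφ]
        refine Finset.sum_congr rfl fun e he => ?_
        rw [coeff_substSeries, hS x e he]
    _ = ∑ d ∈ Iic (equivFunOnFinite.symm fun _ : σ => x.degree),
          coeff d f * coeff x (φ (∏ i, a i ^ d i)) := by
        simp_rw [Finset.sum_comm (s := S x), hφ, Finset.mul_sum]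
    _ = coeff x (substSeries (fun i => φ (a i)) f) := by
        simp only [map_prod, map_pow, coeff_substSeries]

theorem rename_substSeries (g : τ → γ) [Filter.TendstoCofinite g] (a : σ → MvPowerSeries τ R)
    (f : MvPowerSeries σ R) :
    rename g (substSeries a f) = substSeries (fun i => rename g (a i)) f :=
  map_substSeries_of_coeff_eq_sum (rename g).toRingHom _ (coeff_rename g) (fun x e he => by
    rw [← (Set.Finite.mem_toFinset _).mp he, degree_mapDomain]) a f

theorem killCompl_substSeries (ε : γ ↪ τ) (a : σ → MvPowerSeries τ R)
    (f : MvPowerSeries σ R) :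
    killCompl ε (substSeries a f) = substSeries (fun i => killCompl ε (a i)) f :=
  map_substSeries_of_coeff_eq_sum (killCompl ε).toRingHom (fun x => {embDomain ε x})
    (fun p x => by simp [coeff_killCompl]) (fun x e he => by
      rw [Finset.mem_singleton.mp he, embDomain_eq_mapDomain, degree_mapDomain]) a f

end substSeries

theorem killCompl_punit_zero_X_zero :
    killCompl (Function.Embedding.punit (0 : Fin 2)) (X 0 : MvPowerSeries (Fin 2) R) =
      PowerSeries.X :=
  killCompl_X ()

theorem killCompl_punit_zero_X_one :
    killCompl (Function.Embedding.punit (0 : Fin 2)) (X 1 : MvPowerSeries (Fin 2) R) = 0 :=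
  killCompl_X_eq_zero (by rintro ⟨⟨⟩, h⟩; exact absurd h Fin.zero_ne_one)

def bideg (i j : ℕ) : Fin 2 →₀ ℕ := single 0 i + single 1 j

@[simp] theorem bideg_apply_zero (i j : ℕ) : bideg i j 0 = i := by simp [bideg]

@[simp] theorem bideg_apply_one (i j : ℕ) : bideg i j 1 = j := by simp [bideg]

theorem bideg_eq_iff {i j : ℕ} {e : Fin 2 →₀ ℕ} : bideg i j = e ↔ i = e 0 ∧ j = e 1 := by
  constructor
  · rintro rfl
    simp
  · rintro ⟨rfl, rfl⟩
    ext k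
    fin_cases k <;> simp

theorem exists_eq_bideg (e : Fin 2 →₀ ℕ) : ∃ i j, e = bideg i j :=
  ⟨e 0, e 1, (bideg_eq_iff.mpr ⟨rfl, rfl⟩).symm⟩

theorem coeff_rename_fin_two_unit (G : MvPowerSeries (Fin 2) R) (n : ℕ) :
    PowerSeries.coeff n (rename (fun _ : Fin 2 => ()) G) =
      ∑ p ∈ antidiagonal n, coeff (bideg p.1 p.2) G := by
  have hmem : ∀ e : Fin 2 →₀ ℕ, mapDomain (fun _ => ()) e = single () n ↔ e 0 + e 1 = n := by
    intro e
    rw [mapDomain_const_unit, (single_injective ()).eq_iff, degree_eq_sum, Fin.sum_univ_two]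
  rw [PowerSeries.coeff, coeff_rename]
  refine Finset.sum_nbij' (fun e => (e 0, e 1)) (fun p => bideg p.1 p.2) ?_ ?_ ?_ ?_ ?_
  · intro e he
    simpa [hmem] using he
  · intro p hp
    simpa [hmem] using hp
  · intro e _
    exact bideg_eq_iff.mpr ⟨rfl, rfl⟩
  · intro p _
    simp
  · intro e _
    rw [(bideg_eq_iff.mpr ⟨rfl, rfl⟩ : bideg (e 0) (e 1) = e)]

theorem coeff_bideg_succ_X_zero_mul (i j : ℕ) (φ : MvPowerSeries (Fin 2) R) :
    coeff (bideg (i + 1) j) (X 0 * φ) = coeff (bideg i j) φ := by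
  rw [(bideg_eq_iff.mpr ⟨by simp [add_comm], by simp⟩ : bideg (i + 1) j = single 0 1 + bideg i j),
    X, coeff_add_monomial_mul, one_mul]

theorem coeff_bideg_succ_X_one_mul (i j : ℕ) (φ : MvPowerSeries (Fin 2) R) :
    coeff (bideg i (j + 1)) (X 1 * φ) = coeff (bideg i j) φ := by
  rw [(bideg_eq_iff.mpr ⟨by simp, by simp [add_comm]⟩ : bideg i (j + 1) = single 1 1 + bideg i j),
    X, coeff_add_monomial_mul, one_mul]

theorem coeff_bideg_zero_X_zero_mul (j : ℕ) (φ : MvPowerSeries (Fin 2) R) :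
    coeff (bideg 0 j) (X 0 * φ) = 0 :=
  X_dvd_iff.mp (dvd_mul_right _ _) _ (bideg_apply_zero 0 j)

theorem coeff_bideg_zero_X_one_mul (i : ℕ) (φ : MvPowerSeries (Fin 2) R) :
    coeff (bideg i 0) (X 1 * φ) = 0 :=
  X_dvd_iff.mp (dvd_mul_right _ _) _ (bideg_apply_one i 0)

theorem sub_dvd_of_rename_eq_zero {G : MvPowerSeries (Fin 2) R}
    (hG : rename (fun _ : Fin 2 => ()) G = 0) : (X 0 - X 1 : MvPowerSeries (Fin 2) R) ∣ G := by
  have hdiag : ∀ n, ∑ p ∈ antidiagonal n, coeff (bideg p.1 p.2) G = 0 := fun n => by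
    rw [← coeff_rename_fin_two_unit, hG, map_zero]
  -- `(x - y) u = G` reads `u (i-1, j) - u (i, j-1) = G (i, j)`: solve it along antidiagonals.
  let u : MvPowerSeries (Fin 2) R := fun e =>
    ∑ p ∈ antidiagonal (e 1), coeff (bideg (e 0 + 1 + p.1) p.2) G
  have hu : ∀ i j, coeff (bideg i j) u = ∑ p ∈ antidiagonal j, coeff (bideg (i + 1 + p.1) p.2) G :=
    fun i j => by
      show ∑ p ∈ antidiagonal (bideg i j 1), coeff (bideg (bideg i j 0 + 1 + p.1) p.2) G = _
      rw [bideg_apply_zero, bideg_apply_one]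
  refine ⟨u, ext fun e => ?_⟩
  obtain ⟨i, j, rfl⟩ := exists_eq_bideg e
  rw [sub_mul, map_sub]
  rcases i with _ | i <;> rcases j with _ | j
  · simpa [coeff_bideg_zero_X_zero_mul, coeff_bideg_zero_X_one_mul] using hdiag 0
  · have h := hdiag (j + 1)
    rw [Finset.Nat.sum_antidiagonal_succ] at h
    rw [coeff_bideg_zero_X_zero_mul, coeff_bideg_succ_X_one_mul, hu]
    simp_rw [zero_add, add_comm 1]
    linear_combination h
  · rw [coeff_bideg_succ_X_zero_mul, coeff_bideg_zero_X_one_mul, hu]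
    simp
  · rw [coeff_bideg_succ_X_zero_mul, coeff_bideg_succ_X_one_mul, hu, hu,
      Finset.Nat.sum_antidiagonal_succ]
    dsimp only
    rw [add_sub_assoc, ← Finset.sum_sub_distrib, Finset.sum_eq_zero fun p _ => by
      rw [add_comm p.1 1, ← add_assoc, sub_self], add_zero]

end MvPowerSeries

theorem rename_fDiff {R : Type*} [CommRing R] (F : MvPowerSeries (Fin 2) R) (ι : PowerSeries R) :
    rename (fun _ : Fin 2 => ()) (fDiff F ι) = substSeries ![PowerSeries.X, ι] F := by
  have hι : substSeries (fun _ : Unit => (X () : PowerSeries R)) ι = ι := substSeries_X ι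
  rw [fDiff, rename_substSeries]
  congr 1
  ext1 i
  fin_cases i <;> simp [PowerSeries.X, rename_substSeries, hι]

theorem killCompl_fDiff {R : Type*} [CommRing R] (F : MvPowerSeries (Fin 2) R)
    (ι : PowerSeries R) :
    killCompl (Function.Embedding.punit (0 : Fin 2)) (fDiff F ι) =
      substSeries ![PowerSeries.X, PowerSeries.C (PowerSeries.constantCoeff ι)] F := by
  have hι : substSeries (0 : Unit → PowerSeries R) ι =
      PowerSeries.C (PowerSeries.constantCoeff ι) :=
    substSeries_zero ι
  rw [fDiff, killCompl_substSeries]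
  congr 1
  ext1 i
  fin_cases i <;> simp [killCompl_punit_zero_X_zero, killCompl_punit_zero_X_one,
    killCompl_substSeries, ← hι, Pi.zero_def]

theorem IsFormalGroupLaw.killCompl_fDiff_eq_X {R : Type*} [CommRing R]
    {F : MvPowerSeries (Fin 2) R} (hF : IsFormalGroupLaw R F) {ι : PowerSeries R}
    (hι : PowerSeries.constantCoeff ι = 0) :
    killCompl (Function.Embedding.punit (0 : Fin 2)) (fDiff F ι) = PowerSeries.X :=
  calc killCompl _ (fDiff F ι) = substSeries ![PowerSeries.X, 0] F := by
        rw [killCompl_fDiff, hι, map_zero]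
    _ = killCompl (Function.Embedding.punit (0 : Fin 2)) (substSeries ![X 0, 0] F) := by
        rw [killCompl_substSeries]
        congr 1
        ext1 i
        fin_cases i <;> simp [killCompl_punit_zero_X_zero]
    _ = PowerSeries.X := by rw [hF.subst_zero_right, killCompl_punit_zero_X_zero]

/-- Let `F` be a one-dimensional commutative formal group law over `R`
with formal inverse `ι`. Then there is a power series `u` with constant term `1` (hence a
unit of `R[[x,y]]`) such that `x -_F y = (x - y)·u`; in particular `x - y` divides
`x -_F y` with invertible quotient. -/
theorem fgl_fDiff_eq_sub_mul_unit {R : Type*} [CommRing R]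
    (F : MvPowerSeries (Fin 2) R) (hF : IsFormalGroupLaw R F)
    (ι : PowerSeries R) (hι : IsFormalInverse F ι) :
    ∃ u : MvPowerSeries (Fin 2) R,
      MvPowerSeries.constantCoeff u = 1 ∧
      fDiff F ι = ((X 0 : MvPowerSeries (Fin 2) R) - X 1) * u := by
  obtain ⟨u, hu⟩ := sub_dvd_of_rename_eq_zero (G := fDiff F ι) (by rw [rename_fDiff, hι.2])
  refine ⟨u, ?_, hu⟩
  let κ := killCompl (R := R) (Function.Embedding.punit (0 : Fin 2))
  have hκu : κ u = 1 := by
    refine PowerSeries.X_mul_cancel ?_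
    calc PowerSeries.X * κ u = κ ((X 0 - X 1) * u) := by
          rw [map_mul, map_sub, killCompl_punit_zero_X_zero, killCompl_punit_zero_X_one, sub_zero]
      _ = PowerSeries.X * 1 := by rw [← hu, hF.killCompl_fDiff_eq_X hι.1, mul_one]
  rw [← coeff_zero_eq_constantCoeff_apply, ← embDomain_zero (f := Function.Embedding.punit 0),
    ← coeff_killCompl, hκu, coeff_zero_one]
end
end
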